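/- Let n ≥ 2 and d ≥ 1. For 1 ≤ k ≤ d+1, let g_k(x₁,x₂) = x₁^{d-k+1}·(x₁+x₂)^{k-1}, regarded as a real form of degree d in n variables. Then g_k² ∈ Σ_{n,2d}^k but g_k² ∉ Σ_{n,2d}^{k-1}. -/

import Mathlib

/-!
Write `g = x₀ ^ a * (x₀ + x₁) ^ b` with `b = k - 1`, `a + b = d`. Its binomial expansion has
exactly `k` monomials, so `g ^ 2` is the square of a single form in `F_{n,d}^k`.

Conversely, the principal ideals `(x₀)` and `(x₀ + x₁)` are real (a sum of squares lies in
them only if every summand does): each is the kernel of a substitution into the real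
polynomial ring, where a vanishing sum of squares has vanishing terms. Hence `g ^ 2 = ∑ fⱼ ^ 2`
lets us peel the factors of `g` off every `fⱼ`, leaving `fⱼ = g * vⱼ` with `∑ vⱼ ^ 2 = 1`.
Homogeneity makes every `vⱼ` constant, so a nonzero `fⱼ` is a scalar multiple of `g` and has
`k` monomials.
-/

open MvPolynomial

/-- `F_{n,d}^k`: real forms of degree `d` in `n` variables with at most `k` monomials. -/
def IsFormK (n d k : ℕ) (h : MvPolynomial (Fin n) ℝ) : Prop :=
  h.IsHomogeneous d ∧ h.support.card ≤ k

/-- `Σ_{n,2d}^k`: finite sums of squares of forms in `F_{n,d}^k`. -/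
def SigmaSOS (n d k : ℕ) : Set (MvPolynomial (Fin n) ℝ) :=
  { p | ∃ (m : ℕ) (f : Fin m → MvPolynomial (Fin n) ℝ),
      (∀ j, IsFormK n d k (f j)) ∧ p = ∑ j, (f j) ^ 2 }

open Finset

def Ideal.IsReal {R : Type*} [CommRing R] (I : Ideal R) : Prop :=
  ∀ ⦃m : ℕ⦄ (h : Fin m → R), ∑ j, h j ^ 2 ∈ I → ∀ j, h j ∈ I

namespace MvPolynomial

variable {σ : Type*}

theorem eq_zero_of_sum_sq_eq_zero {m : ℕ} {h : Fin m → MvPolynomial σ ℝ}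
    (H : ∑ j, h j ^ 2 = 0) (j : Fin m) : h j = 0 := by
  refine MvPolynomial.funext fun x => ?_
  have hx : ∑ j, eval x (h j) ^ 2 = 0 := by simpa using congrArg (eval x) H
  simpa using
    (sum_eq_zero_iff_of_nonneg fun i _ => sq_nonneg (eval x (h i))).mp hx j (mem_univ j)

theorem isReal_ker {R F : Type*} [CommRing R] [FunLike F R (MvPolynomial σ ℝ)]
    [RingHomClass F R (MvPolynomial σ ℝ)] (f : F) :
    (RingHom.ker f).IsReal := fun _ h hsum j =>
  RingHom.mem_ker.mpr <|
    eq_zero_of_sum_sq_eq_zero (h := fun j => f (h j)) (by simpa using hsum) j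

theorem X_sub_dvd_sub_aeval_update {R : Type*} [CommRing R] [DecidableEq σ] (i : σ)
    (r p : MvPolynomial σ R) : X i - r ∣ p - aeval (Function.update X i r) p := by
  rw [← Ideal.mem_span_singleton, ← Ideal.Quotient.mk_eq_mk_iff_sub_mem]
  have hcomp : (Ideal.Quotient.mkₐ R (Ideal.span {X i - r})).comp
      (aeval (Function.update X i r)) = Ideal.Quotient.mkₐ R _ := by
    refine algHom_ext fun l => ?_
    rcases eq_or_ne l i with rfl | hl
    · simpa [Ideal.Quotient.mk_eq_mk_iff_sub_mem, Ideal.mem_span_singleton] using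
        (dvd_neg.mpr dvd_rfl : X l - r ∣ -(X l - r))
    · simp [hl]
  exact (congrArg (· p) hcomp).symm

theorem ker_aeval_update_X {R : Type*} [CommRing R] [DecidableEq σ] (i : σ) {r : MvPolynomial σ R}
    (hr : aeval (Function.update X i r) r = r) :
    RingHom.ker (aeval (Function.update X i r)) = Ideal.span {X i - r} := by
  refine le_antisymm (fun p hp => ?_) ?_
  · have hdvd := X_sub_dvd_sub_aeval_update i r p
    rwa [RingHom.mem_ker.mp hp, sub_zero, ← Ideal.mem_span_singleton] at hdvd
  · rw [Ideal.span_le, Set.singleton_subset_iff, SetLike.mem_coe, RingHom.mem_ker, map_sub,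
      aeval_X, Function.update_self, hr, sub_self]

theorem isReal_span_X_sub [DecidableEq σ] {i : σ} {r : MvPolynomial σ ℝ}
    (hr : aeval (Function.update X i r) r = r) : (Ideal.span {X i - r}).IsReal :=
  ker_aeval_update_X i hr ▸ isReal_ker _

theorem isReal_span_X (i : σ) : (Ideal.span {(X i : MvPolynomial σ ℝ)}).IsReal := by
  classical
  simpa using isReal_span_X_sub (i := i) (map_zero _)

theorem isReal_span_X_add_X {i j : σ} (hij : i ≠ j) :
    (Ideal.span {(X i + X j : MvPolynomial σ ℝ)}).IsReal := by
  classical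
  simpa [add_comm] using
    isReal_span_X_sub (i := j) (r := -X i) (by simp [Function.update_of_ne hij])

end MvPolynomial

namespace Ideal.IsReal

variable {R : Type*} [CommRing R] [IsDomain R] {ℓ : R}

theorem exists_eq_mul_of_sum_sq_eq (hℓ : (Ideal.span {ℓ}).IsReal) (hℓ0 : ℓ ≠ 0) {m : ℕ}
    {h : Fin m → R} {w : R} (H : ∑ j, h j ^ 2 = ℓ ^ 2 * w) :
    ∃ u : Fin m → R, (∀ j, h j = ℓ * u j) ∧ ∑ j, u j ^ 2 = w := by
  have hdvd : ∀ j, ℓ ∣ h j := fun j => Ideal.mem_span_singleton.mp <|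
    hℓ h (Ideal.mem_span_singleton.mpr ⟨ℓ * w, by rw [H]; ring⟩) j
  choose u hu using hdvd
  refine ⟨u, hu, mul_left_cancel₀ (pow_ne_zero 2 hℓ0) ?_⟩
  rw [← H, mul_sum]
  exact sum_congr rfl fun j _ => by rw [hu j]; ring

theorem exists_eq_pow_mul_of_sum_sq_eq (hℓ : (Ideal.span {ℓ}).IsReal) (hℓ0 : ℓ ≠ 0) (a : ℕ)
    {m : ℕ} {h : Fin m → R} {w : R} (H : ∑ j, h j ^ 2 = ℓ ^ (2 * a) * w) :
    ∃ u : Fin m → R, (∀ j, h j = ℓ ^ a * u j) ∧ ∑ j, u j ^ 2 = w := by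
  induction a generalizing h with
  | zero => exact ⟨h, by simp, by simpa using H⟩
  | succ a ih =>
    obtain ⟨v, hv, hvsum⟩ := hℓ.exists_eq_mul_of_sum_sq_eq hℓ0 (w := ℓ ^ (2 * a) * w)
      (by rw [H]; ring)
    obtain ⟨u, hu, husum⟩ := ih hvsum
    exact ⟨u, fun j => by rw [hv j, hu j]; ring, husum⟩

end Ideal.IsReal

namespace MvPolynomial

variable {σ R : Type*} [CommRing R]

theorem support_sum_monomial_of_injOn [DecidableEq σ] {ι : Type*} (s : Finset ι)
    {ν : ι → σ →₀ ℕ} {c : ι → R} (hν : Set.InjOn ν s) (hc : ∀ x ∈ s, c x ≠ 0) :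
    (∑ x ∈ s, monomial (ν x) (c x)).support = s.image ν := by
  ext μ
  rw [mem_support_iff, coeff_sum, mem_image]
  simp only [coeff_monomial]
  constructor
  · intro hμ
    obtain ⟨x, hx, hxμ⟩ := exists_ne_zero_of_sum_ne_zero hμ
    exact ⟨x, hx, by_contra fun h => hxμ (if_neg h)⟩
  · rintro ⟨x, hx, rfl⟩
    rw [sum_eq_single_of_mem x hx fun y hy hyx => if_neg fun h => hyx (hν hy hx h), if_pos rfl]
    exact hc x hx

theorem X_pow_mul_X_add_X_pow_eq_sum (i j : σ) (a b : ℕ) :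
    (X i ^ a * (X i + X j) ^ b : MvPolynomial σ R) =
      ∑ m ∈ range (b + 1), monomial (Finsupp.single i (a + m) + Finsupp.single j (b - m))
        (b.choose m : R) := by
  rw [add_pow, mul_sum]
  refine sum_congr rfl fun m _ => ?_
  simp only [X_pow_eq_monomial, ← map_natCast (C : R →+* MvPolynomial σ R), C_apply,
    monomial_mul, Finsupp.single_add, add_zero, one_mul, add_assoc]

theorem card_support_X_pow_mul_X_add_X_pow [CharZero R] {i j : σ} (hij : i ≠ j) (a b : ℕ) :
    (X i ^ a * (X i + X j) ^ b : MvPolynomial σ R).support.card = b + 1 := by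
  classical
  have hν : Set.InjOn (fun m => Finsupp.single i (a + m) + Finsupp.single j (b - m))
      (range (b + 1) : Set ℕ) := by
    intro m hm m' hm' h
    have := DFunLike.congr_fun h j
    simp [hij] at this hm hm'
    omega
  rw [X_pow_mul_X_add_X_pow_eq_sum, support_sum_monomial_of_injOn _ hν, card_image_of_injOn hν,
    card_range]
  intro m hm
  exact Nat.cast_ne_zero.mpr (Nat.choose_pos (Nat.lt_succ_iff.mp (mem_range.mp hm))).ne'

theorem isHomogeneous_X_pow_mul_X_add_X_pow (i j : σ) (a b : ℕ) :
    (X i ^ a * (X i + X j) ^ b : MvPolynomial σ R).IsHomogeneous (a + b) := by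
  simpa using
    (isHomogeneous_X_pow i a).mul (((isHomogeneous_X R i).add (isHomogeneous_X R j)).pow b)

theorem card_support_mul_of_isHomogeneous [IsDomain R] {p q : MvPolynomial σ R} {d : ℕ}
    (hp : p.IsHomogeneous d) (hpq : (p * q).IsHomogeneous d) (hq : q ≠ 0) :
    (p * q).support.card = p.support.card := by
  rcases eq_or_ne p 0 with rfl | hp0
  · simp
  have hdeg : q.totalDegree = 0 := by
    have := (hpq.totalDegree (mul_ne_zero hp0 hq)).symm
    rw [totalDegree_mul_of_isDomain hp0 hq, hp.totalDegree hp0] at this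
    omega
  obtain ⟨c, rfl⟩ : ∃ c, q = C c := ⟨_, totalDegree_eq_zero_iff_eq_C.mp hdeg⟩
  rw [mul_comm, C_mul', support_smul_eq (by simpa using hq)]

end MvPolynomial

theorem gk_sq_separates (n d k : ℕ) (hn : 2 ≤ n)
    (hk1 : 1 ≤ k) (hk : k ≤ d + 1)
    (g : MvPolynomial (Fin n) ℝ)
    (hg : g = X (⟨0, by omega⟩ : Fin n) ^ (d - (k - 1)) *
      (X (⟨0, by omega⟩ : Fin n) + X (⟨1, by omega⟩ : Fin n)) ^ (k - 1)) :
    g ^ 2 ∈ SigmaSOS n d k ∧ g ^ 2 ∉ SigmaSOS n d (k - 1) := by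
  set i₀ : Fin n := ⟨0, by omega⟩
  set i₁ : Fin n := ⟨1, by omega⟩
  have hi : i₀ ≠ i₁ := by simp [i₀, i₁, Fin.ext_iff]
  have hhom : g.IsHomogeneous d := by
    simpa [hg, show d - (k - 1) + (k - 1) = d by omega] using
      isHomogeneous_X_pow_mul_X_add_X_pow (R := ℝ) i₀ i₁ (d - (k - 1)) (k - 1)
  have hcard : g.support.card = k := by
    rw [hg, card_support_X_pow_mul_X_add_X_pow hi]
    omega
  refine ⟨⟨1, fun _ => g, fun _ => ⟨hhom, hcard.le⟩, by simp⟩, ?_⟩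
  rintro ⟨m, f, hf, hsum⟩
  have hℓ : (X i₀ + X i₁ : MvPolynomial (Fin n) ℝ) ≠ 0 := fun h => by
    simpa [coeff_X, Finsupp.single_eq_single_iff, hi.symm] using
      congrArg (coeff (Finsupp.single i₀ 1)) h
  obtain ⟨u, hfu, hu⟩ := (isReal_span_X i₀).exists_eq_pow_mul_of_sum_sq_eq (X_ne_zero i₀)
    (d - (k - 1)) (w := (X i₀ + X i₁) ^ (2 * (k - 1)) * 1) (by rw [← hsum, hg]; ring)
  obtain ⟨v, huv, hv⟩ := (isReal_span_X_add_X hi).exists_eq_pow_mul_of_sum_sq_eq hℓ (k - 1) hu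
  obtain ⟨j, -, hj⟩ := exists_ne_zero_of_sum_ne_zero (hv ▸ one_ne_zero)
  have hfj : f j = g * v j := by rw [hfu, huv, hg]; ring
  have hfj_card := (hf j).2
  rw [hfj, card_support_mul_of_isHomogeneous hhom (hfj ▸ (hf j).1) (by simpa using hj),
    hcard] at hfj_card
  omega
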